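/- arXiv:math/0112024 — 5 statements merged into one kernel-verified Lean document; each statement's English description precedes it below -/
import Mathlib

section
/- The set of totally positive matrices in GL_n(ℝ) is closed under matrix multiplication. -/
/-- A real square matrix is totally positive if all its minors
(indexed by strictly increasing row and column selections) are strictly positive. -/
def TotallyPos {n : ℕ} (A : Matrix (Fin n) (Fin n) ℝ) : Prop :=
  ∀ (k : ℕ) (r c : Fin k → Fin n), StrictMono r → StrictMono c →
    0 < (A.submatrix r c).det

/-! By the Cauchy–Binet formula, a `k × k` minor of `A * B` is the sum, over strictly increasing
`s : Fin k → Fin n`, of the minor of `A` in columns `s` times the minor of `B` in rows `s`. All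
these products are positive, and the sum is nonempty since `k ≤ n`. -/

open Finset Equiv Matrix

section CauchyBinet

variable {R ι : Type*} [CommRing R] [Fintype ι] {k : ℕ}

theorem Matrix.det_mul_eq_sum_prod_mul_det_submatrix {m : Type*} [Fintype m] [DecidableEq m]
    (M : Matrix m ι R) (N : Matrix ι m R) :
    (M * N).det = ∑ f : m → ι, (∏ i, M i (f i)) * (N.submatrix f id).det := by
  classical
  have hrows : (M * N : m → m → R) = fun i => ∑ l, M i l • N l := by
    ext i j
    simp [mul_apply, Finset.sum_apply]
  rw [det, hrows]
  refine ((detRowAlternating : (m → R) [⋀^m]→ₗ[R] R).toMultilinearMap.map_sum _).trans ?_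
  refine Finset.sum_congr rfl fun f _ => ?_
  exact (detRowAlternating : (m → R) [⋀^m]→ₗ[R] R).map_smul_univ _ _

variable [LinearOrder ι]

/-- Every injective `f` factors uniquely as `s ∘ σ` with `s` strictly monotone and `σ` a
permutation: `s` is `f` sorted by `Tuple.sort`. -/
theorem Fin.sum_eq_sum_strictMono_sum_perm {M : Type*} [AddCommMonoid M] (g : (Fin k → ι) → M)
    (hg : ∀ f, ¬ Function.Injective f → g f = 0) :
    ∑ f, g f =
      ∑ s ∈ univ.filter (StrictMono : (Fin k → ι) → Prop), ∑ σ : Perm (Fin k), g (s ∘ σ) := by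
  classical
  rw [← Finset.sum_filter_of_ne (p := Function.Injective)
    fun f _ hf => by_contra fun h => hf (hg f h), ← Finset.sum_product']
  refine Finset.sum_nbij' (fun f => (f ∘ Tuple.sort f, (Tuple.sort f)⁻¹)) (fun p => p.1 ∘ p.2)
    ?_ ?_ ?_ ?_ ?_
  · intro f hf
    simp only [mem_product, mem_filter, mem_univ, true_and, and_true] at hf ⊢
    exact (Tuple.monotone_sort f).strictMono_of_injective (hf.comp (Tuple.sort f).injective)
  · rintro ⟨s, σ⟩ hp
    simp only [mem_product, mem_filter, mem_univ, true_and, and_true] at hp ⊢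
    exact hp.injective.comp σ.injective
  · intro f _
    simp [Function.comp_assoc]
  · rintro ⟨s, σ⟩ hp
    simp only [mem_product, mem_filter, mem_univ, true_and, and_true] at hp
    have hsorted : (s ∘ σ) ∘ Tuple.sort (s ∘ σ) = s := by
      rw [Tuple.comp_perm_comp_sort_eq_comp_sort, (Tuple.sort_eq_refl_iff_monotone).2 hp.monotone]
      rfl
    have hσ : σ * Tuple.sort (s ∘ σ) = 1 := Equiv.ext fun i => hp.injective (congrFun hsorted i)
    exact Prod.ext hsorted (inv_eq_of_mul_eq_one_left hσ)
  · intro f _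
    simp [Function.comp_assoc]

theorem Matrix.det_mul_eq_sum_strictMono_det_mul_det (M : Matrix (Fin k) ι R)
    (N : Matrix ι (Fin k) R) :
    (M * N).det = ∑ s ∈ univ.filter (StrictMono : (Fin k → ι) → Prop),
      (M.submatrix id s).det * (N.submatrix s id).det := by
  rw [det_mul_eq_sum_prod_mul_det_submatrix, Fin.sum_eq_sum_strictMono_sum_perm]
  · refine Finset.sum_congr rfl fun s _ => ?_
    rw [← det_transpose (M.submatrix id s), det_apply, Finset.sum_mul]
    refine Finset.sum_congr rfl fun σ _ => ?_
    rw [show N.submatrix (s ∘ σ) id = (N.submatrix s id).submatrix σ id from rfl, det_permute,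
      Units.smul_def]
    simp only [transpose_apply, submatrix_apply, id, Function.comp_apply, zsmul_eq_mul]
    ring
  · intro f hf
    obtain ⟨i, j, hij, hne⟩ : ∃ i j, f i = f j ∧ i ≠ j := by
      simpa [Function.Injective] using hf
    rw [det_zero_of_row_eq hne (by ext; simp [hij]), mul_zero]

end CauchyBinet

theorem totallyPos_mul_general {n : ℕ} (A B : Matrix (Fin n) (Fin n) ℝ)
    (hA : TotallyPos A) (hB : TotallyPos B) :
    TotallyPos (A * B) := by
  intro k r c hr hc
  have hkn : k ≤ n := by simpa using Fintype.card_le_of_injective r hr.injective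
  rw [submatrix_mul A B r id c Function.bijective_id, det_mul_eq_sum_strictMono_det_mul_det]
  refine Finset.sum_pos (fun s hs => mul_pos (hA k r s hr ?_) (hB k s c ?_ hc))
    ⟨Fin.castLE hkn, by simpa using Fin.strictMono_castLE hkn⟩ <;>
  simpa using hs

/-- The totally positive matrices in `GL_n(ℝ)` are closed under multiplication. -/
theorem totallyPos_mul {n : ℕ} (A B : Matrix (Fin n) (Fin n) ℝ)
    (hAu : IsUnit A.det) (hBu : IsUnit B.det)
    (hA : TotallyPos A) (hB : TotallyPos B) :
    TotallyPos (A * B) :=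
  totallyPos_mul_general A B hA hB
end

section
/- The map Δ = (Δ_1, ..., Δ_{n-1}) from the group of n×n unipotent lower-triangular Toeplitz matrices over a field to affine (n−1)-space, sending x to its lower-left corner minors, has Δ^{-1}(0) = {identity}: if all the minors Δ_1(x), ..., Δ_{n-1}(x) vanish, then x is the identity matrix. -/
/-!
By downward induction on `m`: once `a m'` vanishes for all `m < m' < n`, the corner matrix of
`Δ_m` is upper triangular with constant diagonal `a m`, so `0 = Δ_m(x) = a m ^ (n - m)`
forces `a m = 0`. Hence `x` has `1` on the diagonal and `0` elsewhere.
-/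

namespace Matrix

def lowerToeplitz {R : Type*} [Zero R] (n : ℕ) (a : ℕ → R) : Matrix (Fin n) (Fin n) R :=
  of fun i j => if (j : ℕ) ≤ i then a (i - j) else 0

def lowerLeftCorner {α : Type*} {n : ℕ} (x : Matrix (Fin n) (Fin n) α) (m : ℕ) (hm : m < n) :
    Matrix (Fin (n - m)) (Fin (n - m)) α :=
  x.submatrix (fun i => ⟨m + i, by omega⟩) (fun j => ⟨j, by omega⟩)

variable {R : Type*} {n : ℕ}

theorem lowerLeftCorner_lowerToeplitz_apply [Zero R] (a : ℕ → R) {m : ℕ} (hm : m < n)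
    (i j : Fin (n - m)) :
    lowerLeftCorner (lowerToeplitz n a) m hm i j =
      if (j : ℕ) ≤ m + i then a (m + i - j) else 0 :=
  rfl

theorem lowerToeplitz_eq_one [Zero R] [One R] {a : ℕ → R} (ha0 : a 0 = 1)
    (ha : ∀ m, 0 < m → m < n → a m = 0) : lowerToeplitz n a = 1 := by
  ext i j
  rcases lt_trichotomy (j : ℕ) i with h | h | h
  · rw [lowerToeplitz, of_apply, if_pos h.le, ha _ (by omega) (by omega),
      one_apply_ne (by rintro rfl; omega)]
  · obtain rfl := Fin.ext h
    simp [lowerToeplitz, ha0]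
  · rw [lowerToeplitz, of_apply, if_neg (by omega), one_apply_ne (by rintro rfl; omega)]

variable [CommRing R]

theorem det_lowerLeftCorner_lowerToeplitz (a : ℕ → R) {m : ℕ} (hm : m < n)
    (ha : ∀ k, m < k → k < n → a k = 0) :
    (lowerLeftCorner (lowerToeplitz n a) m hm).det = a m ^ (n - m) := by
  have htri : (lowerLeftCorner (lowerToeplitz n a) m hm).IsUpperTriangular := by
    intro i j (hji : j < i)
    rw [lowerLeftCorner_lowerToeplitz_apply, if_pos (by omega)]
    exact ha _ (by omega) (by omega)
  rw [det_of_isUpperTriangular htri]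
  simp [lowerLeftCorner_lowerToeplitz_apply]

theorem lowerToeplitz_coeff_eq_zero_of_det_lowerLeftCorner [IsReduced R] (a : ℕ → R)
    (hΔ : ∀ m, 0 < m → (hm : m < n) → (lowerLeftCorner (lowerToeplitz n a) m hm).det = 0)
    {m : ℕ} (hm0 : 0 < m) (hm : m < n) : a m = 0 := by
  induction h : n - m using Nat.strong_induction_on generalizing m with
  | _ d ih =>
    have hpow : a m ^ (n - m) = 0 := by
      rw [← det_lowerLeftCorner_lowerToeplitz a hm
        fun k hmk hk => ih (n - k) (by omega) (by omega) hk rfl]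
      exact hΔ m hm0 hm
    exact IsNilpotent.eq_zero ⟨_, hpow⟩

end Matrix

/-- If all the lower-left corner minors `Δ_1(x), ..., Δ_{n-1}(x)` of a unipotent
lower-triangular Toeplitz matrix `x` over a field vanish, then `x` is the identity. -/
theorem toeplitz_corner_minors_vanish_imp_id {n : ℕ} {K : Type*} [Field K]
    (a : ℕ → K) (ha0 : a 0 = 1)
    (x : Matrix (Fin n) (Fin n) K)
    (hx : ∀ i j : Fin n, x i j = if (j : ℕ) ≤ (i : ℕ) then a ((i : ℕ) - (j : ℕ)) else 0)
    (hΔ : ∀ m : ℕ, 0 < m → (hm : m < n) →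
      (x.submatrix
          (fun i : Fin (n - m) => (⟨m + (i : ℕ), by have := i.isLt; omega⟩ : Fin n))
          (fun j : Fin (n - m) => (⟨(j : ℕ), by have := j.isLt; omega⟩ : Fin n))).det = 0) :
    x = 1 := by
  obtain rfl : x = Matrix.lowerToeplitz n a := Matrix.ext hx
  exact Matrix.lowerToeplitz_eq_one ha0 fun m hm0 hm =>
    Matrix.lowerToeplitz_coeff_eq_zero_of_det_lowerLeftCorner a hΔ hm0 hm
end

section
/- Let M be an irreducible nonnegative n×n real matrix, and suppose v and w are both nonnegative eigenvectors of M (possibly for different eigenvalues). Then v and w are scalar multiples of each other; in particular their eigenvalues coincide (this common eigenvalue being the Perron–Frobenius eigenvalue). -/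
/-!
A nonnegative vector `u` with `A *ᵥ u ≤ c • u` satisfies `A ^ k *ᵥ u ≤ c ^ k • u`, so a zero entry
`u i = 0` forces `(A ^ k) i j * u j ≤ 0` for all `k`; irreducibility makes some `(A ^ k) i j`
positive, hence `u = 0`. In particular nonnegative eigenvectors are positive. Given eigenvectors
`A *ᵥ v = a • v`, `A *ᵥ w = b • w` with `a ≤ b`, subtract from `v` the largest multiple `s • w`
lying below it: `u = v - s • w` is nonnegative, has a zero entry, and `A *ᵥ u ≤ b • u`, so
`v = s • w`, which in turn forces `a = b`.
-/

namespace Matrix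

variable {n R : Type*} [Fintype n] {A : Matrix n n R} {u v w : n → R} {a b c : R}

section OrderedCommSemiring

variable [CommSemiring R] [PartialOrder R] [IsOrderedRing R]

lemma mulVec_mono_of_nonneg (hA : ∀ i j, 0 ≤ A i j) (huv : u ≤ v) : A *ᵥ u ≤ A *ᵥ v :=
  fun i => dotProduct_le_dotProduct_of_nonneg_left huv (hA i)

lemma mul_apply_le_mulVec_apply (hA : ∀ i j, 0 ≤ A i j) (hu : 0 ≤ u) (i j : n) :
    A i j * u j ≤ (A *ᵥ u) i :=
  Finset.single_le_sum (f := fun l => A i l * u l) (fun l _ => mul_nonneg (hA i l) (hu l))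
    (Finset.mem_univ j)

lemma pow_mulVec_le_pow_smul [DecidableEq n] (hA : ∀ i j, 0 ≤ A i j) (hc : 0 ≤ c)
    (hAu : A *ᵥ u ≤ c • u) (k : ℕ) : A ^ k *ᵥ u ≤ c ^ k • u := by
  induction k with
  | zero => simp
  | succ k ih =>
    calc A ^ (k + 1) *ᵥ u = A ^ k *ᵥ (A *ᵥ u) := by rw [pow_succ, mulVec_mulVec]
      _ ≤ A ^ k *ᵥ (c • u) := mulVec_mono_of_nonneg (pow_apply_nonneg hA k) hAu
      _ = c • (A ^ k *ᵥ u) := mulVec_smul _ _ _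
      _ ≤ c • (c ^ k • u) := smul_le_smul_of_nonneg_left ih hc
      _ = c ^ (k + 1) • u := by rw [smul_smul, pow_succ']

end OrderedCommSemiring

lemma eigenvalue_eq_of_eq_smul [Field R] (hv0 : v ≠ 0) (hAv : A *ᵥ v = a • v)
    (hAw : A *ᵥ w = b • w) {s : R} (hvw : v = s • w) : a = b :=
  smul_left_injective R hv0 <| show a • v = b • v by
    rw [← hAv, hvw, mulVec_smul, hAw, smul_comm]

variable [Field R] [LinearOrder R] [IsStrictOrderedRing R]

lemma eigenvalue_nonneg_of_nonneg (hA : ∀ i j, 0 ≤ A i j) (hv : 0 ≤ v) (hv0 : v ≠ 0)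
    (hAv : A *ᵥ v = a • v) : 0 ≤ a := by
  obtain ⟨i, hi⟩ := (Pi.lt_def.1 (hv.lt_of_ne' hv0)).2
  have hAv_i : 0 ≤ a * v i := by simpa [hAv] using mulVec_mono_of_nonneg hA hv i
  exact nonneg_of_mul_nonneg_left hAv_i hi

variable [DecidableEq n]

lemma IsIrreducible.eq_zero_of_mulVec_le_smul (hA : A.IsIrreducible) (hc : 0 ≤ c) (hu : 0 ≤ u)
    (hAu : A *ᵥ u ≤ c • u) {i : n} (hi : u i = 0) : u = 0 := by
  funext j
  obtain ⟨k, -, hk⟩ := (isIrreducible_iff_exists_pow_pos hA.nonneg).1 hA i j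
  have hkj : (A ^ k) i j * u j ≤ 0 :=
    calc (A ^ k) i j * u j ≤ (A ^ k *ᵥ u) i :=
          mul_apply_le_mulVec_apply (pow_apply_nonneg hA.nonneg k) hu i j
      _ ≤ (c ^ k • u) i := pow_mulVec_le_pow_smul hA.nonneg hc hAu k i
      _ = 0 := by simp [hi]
  exact le_antisymm (nonpos_of_mul_nonpos_right hkj hk) (hu j)

lemma IsIrreducible.pos_of_nonneg_eigenvector (hA : A.IsIrreducible) (hv : 0 ≤ v) (hv0 : v ≠ 0)
    (hAv : A *ᵥ v = a • v) (i : n) : 0 < v i :=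
  (hv i).lt_of_ne' fun hi => hv0 <|
    hA.eq_zero_of_mulVec_le_smul (eigenvalue_nonneg_of_nonneg hA.nonneg hv hv0 hAv) hv hAv.le hi

lemma IsIrreducible.exists_eq_smul_of_eigenvalue_le (hA : A.IsIrreducible) (hv : 0 ≤ v)
    (hw : 0 ≤ w) (hw0 : w ≠ 0) (hAv : A *ᵥ v = a • v) (hAw : A *ᵥ w = b • w) (hab : a ≤ b) :
    ∃ s : R, v = s • w := by
  have hwpos := hA.pos_of_nonneg_eigenvector hw hw0 hAw
  have hb := eigenvalue_nonneg_of_nonneg hA.nonneg hw hw0 hAw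
  have : Nonempty n := let ⟨i, _⟩ := Function.ne_iff.1 hw0; ⟨i⟩
  obtain ⟨i₀, hmin⟩ := Finite.exists_min fun i => v i / w i
  set s := v i₀ / w i₀
  have hu : 0 ≤ v - s • w := fun i => by
    simpa [sub_nonneg] using (le_div_iff₀ (hwpos i)).1 (hmin i)
  have hu₀ : (v - s • w) i₀ = 0 := by simp [s, div_mul_cancel₀ _ (hwpos i₀).ne']
  have hAu : A *ᵥ (v - s • w) ≤ b • (v - s • w) :=
    calc A *ᵥ (v - s • w) = a • v - s • b • w := by rw [mulVec_sub, mulVec_smul, hAv, hAw]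
      _ ≤ b • v - s • b • w := sub_le_sub_right (smul_le_smul_of_nonneg_right hab hv) _
      _ = b • (v - s • w) := by rw [smul_sub, smul_comm b s]
  exact ⟨s, sub_eq_zero.1 (hA.eq_zero_of_mulVec_le_smul hb hu hAu hu₀)⟩

lemma IsIrreducible.eigenvalue_eq_of_nonneg_eigenvectors (hA : A.IsIrreducible) (hv : 0 ≤ v)
    (hv0 : v ≠ 0) (hw : 0 ≤ w) (hw0 : w ≠ 0) (hAv : A *ᵥ v = a • v) (hAw : A *ᵥ w = b • w) :
    a = b := by
  rcases le_total a b with hab | hba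
  · obtain ⟨s, hvw⟩ := hA.exists_eq_smul_of_eigenvalue_le hv hw hw0 hAv hAw hab
    exact eigenvalue_eq_of_eq_smul hv0 hAv hAw hvw
  · obtain ⟨s, hwv⟩ := hA.exists_eq_smul_of_eigenvalue_le hw hv hv0 hAw hAv hba
    exact (eigenvalue_eq_of_eq_smul hw0 hAw hAv hwv).symm

end Matrix

open Matrix in
/-- Any two nonnegative eigenvectors of an irreducible nonnegative real matrix are
proportional; in particular their eigenvalues coincide (the Perron–Frobenius
eigenvalue). -/
theorem nonneg_eigenvectors_of_irreducible_proportional {n : ℕ}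
    (M : Matrix (Fin n) (Fin n) ℝ)
    (hM : ∀ i j, 0 ≤ M i j)
    (hirr : ∀ i j : Fin n, ∃ k : ℕ, 1 ≤ k ∧ 0 < (M ^ k) i j)
    (v w : Fin n → ℝ) (hv0 : v ≠ 0) (hw0 : w ≠ 0)
    (hvnn : ∀ i, 0 ≤ v i) (hwnn : ∀ i, 0 ≤ w i)
    (a b : ℝ) (hva : M.mulVec v = a • v) (hwb : M.mulVec w = b • w) :
    (∃ c : ℝ, w = c • v) ∧ a = b := by
  have hA : M.IsIrreducible := (isIrreducible_iff_exists_pow_pos hM).2 hirr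
  obtain rfl := hA.eigenvalue_eq_of_nonneg_eigenvectors hvnn hv0 hwnn hw0 hva hwb
  exact ⟨hA.exists_eq_smul_of_eigenvalue_le hwnn hvnn hv0 hwb hva le_rfl, rfl⟩
end

section
/- (Jacobi–Trudi, dual form) For a partition λ fitting in a d × (n−d) box with conjugate partition λ', the Schur polynomial in d variables satisfies s_λ(x_1, ..., x_d) = det( e_{λ'_i − i + j}(x_1, ..., x_d) )_{i,j=1}^{c}, where c = n − d and e_k denotes the k-th elementary symmetric polynomial (with e_k = 0 for k < 0 or k > d). -/
open MvPolynomial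

/-- The `k`-th elementary symmetric polynomial in the `d` variables `x_1, ..., x_d`,
with integer index: `e_k = 0` for `k < 0` (and automatically for `k > d`). -/
noncomputable def eInt (R : Type*) [CommRing R] (d : ℕ) (k : ℤ) : MvPolynomial (Fin d) R :=
  if 0 ≤ k then ∑ S ∈ (Finset.univ : Finset (Fin d)).powersetCard k.toNat, ∏ i ∈ S, X i
  else 0

/-- The conjugate (transpose) partition `λ'` of `λ : Fin d → ℕ`:
`λ'_i = #{j | λ_j ≥ i}` (here 0-based: `conjPart λ i = #{j | λ j ≥ i+1}`). -/
def conjPart {d : ℕ} (lam : Fin d → ℕ) (i : ℕ) : ℕ :=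
  (Finset.univ.filter fun j : Fin d => i + 1 ≤ lam j).card

namespace DJT


variable {R : Type*} [CommRing R] {d : ℕ}

lemma eInt_neg (R : Type*) [CommRing R] (d : ℕ) {k : ℤ} (hk : k < 0) : eInt R d k = 0 := by
  rw [eInt, if_neg (by omega)]

lemma eInt_coe (R : Type*) [CommRing R] (d : ℕ) (m : ℕ) :
    eInt R d (m : ℤ) = ∑ S ∈ (Finset.univ : Finset (Fin d)).powersetCard m, ∏ i ∈ S, X i := by
  rw [eInt, if_pos (by positivity), Int.toNat_natCast]

lemma eInt_zero (R : Type*) [CommRing R] (d : ℕ) : eInt R d 0 = 1 := by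
  have := eInt_coe R d 0
  simpa [Finset.powersetCard_zero] using this

lemma eInt_gt (R : Type*) [CommRing R] (d : ℕ) {k : ℤ} (hk : (d : ℤ) < k) : eInt R d k = 0 := by
  have h0 : (0:ℤ) ≤ k := le_trans (Int.natCast_nonneg d) (le_of_lt hk)
  rw [eInt, if_pos h0]
  have : (Finset.univ : Finset (Fin d)).card < k.toNat := by
    simp only [Finset.card_univ, Fintype.card_fin]; omega
  rw [Finset.powersetCard_eq_empty.2 this, Finset.sum_empty]

lemma conjPart_le (lam : Fin d → ℕ) (i : ℕ) : conjPart lam i ≤ d := by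
  classical
  exact (Finset.card_filter_le _ _).trans (by simp)

lemma lt_conjPart_iff (lam : Fin d → ℕ) (hanti : ∀ i j : Fin d, i ≤ j → lam j ≤ lam i)
    (i : ℕ) (j : Fin d) : (j : ℕ) < conjPart lam i ↔ i + 1 ≤ lam j := by
  classical
  constructor
  · intro h
    by_contra hc
    push_neg at hc
    have hsub : (Finset.univ.filter fun j' : Fin d => i + 1 ≤ lam j') ⊆ Finset.Iio j := by
      intro j' hj'
      rw [Finset.mem_filter] at hj'
      rw [Finset.mem_Iio]
      by_contra hge
      push_neg at hge
      exact absurd (le_trans hj'.2 (hanti j j' hge)) (by omega)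
    have := Finset.card_le_card hsub
    rw [Fin.card_Iio] at this
    exact absurd (lt_of_lt_of_le h this) (lt_irrefl _)
  · intro h
    have hsub : Finset.Iic j ⊆ (Finset.univ.filter fun j' : Fin d => i + 1 ≤ lam j') := by
      intro j' hj'
      rw [Finset.mem_Iic] at hj'
      rw [Finset.mem_filter]
      exact ⟨Finset.mem_univ _, le_trans h (hanti j' j hj')⟩
    have := Finset.card_le_card hsub
    rw [Fin.card_Iic] at this
    unfold conjPart
    omega

lemma conjPart_antitone (lam : Fin d → ℕ) {i i' : ℕ} (h : i ≤ i') :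
    conjPart lam i' ≤ conjPart lam i := by
  classical
  apply Finset.card_le_card
  intro j hj
  rw [Finset.mem_filter] at hj ⊢
  exact ⟨hj.1, by omega⟩




def phiFun (n d : ℕ) (lam : Fin d → ℕ) : Fin (n - d) ⊕ Fin d → ℕ
  | .inl i => d + i - conjPart lam i
  | .inr j => lam j + (d - 1 - j)

lemma phiFun_lt {n d : ℕ} (hdn : d < n) (lam : Fin d → ℕ) (hbox : ∀ j, lam j ≤ n - d) :
    ∀ x, phiFun n d lam x < n := by
  rintro (i | j)
  · have := i.isLt
    simp only [phiFun]
    omega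
  · have := j.isLt
    have := hbox j
    simp only [phiFun]
    omega

lemma phiFun_inj {n d : ℕ} (lam : Fin d → ℕ)
    (hanti : ∀ i j : Fin d, i ≤ j → lam j ≤ lam i) :
    Function.Injective (phiFun n d lam) := by
  have key : ∀ (i : Fin (n - d)) (j : Fin d),
      d + (i : ℕ) - conjPart lam i ≠ lam j + (d - 1 - (j : ℕ)) := by
    intro i j
    have h1 := conjPart_le lam i
    have h2 := lt_conjPart_iff lam hanti i j
    have := j.isLt
    by_cases hc : (j : ℕ) < conjPart lam (i : ℕ)
    · have := h2.1 hc
      omega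
    · have : ¬ ((i:ℕ) + 1 ≤ lam j) := fun h => hc (h2.2 h)
      omega
  rintro (i | j) (i' | j') h
  · simp only [phiFun] at h
    rcases lt_trichotomy i i' with hlt | heq | hlt
    · have h1 := conjPart_antitone lam (le_of_lt (Fin.lt_iff_val_lt_val.1 hlt))
      have := conjPart_le lam i
      have := Fin.lt_iff_val_lt_val.1 hlt
      omega
    · exact congrArg Sum.inl heq
    · have h1 := conjPart_antitone lam (le_of_lt (Fin.lt_iff_val_lt_val.1 hlt))
      have := conjPart_le lam i'
      have := Fin.lt_iff_val_lt_val.1 hlt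
      omega
  · exact absurd h (key i j')
  · exact absurd h.symm (key i' j)
  · simp only [phiFun] at h
    rcases lt_trichotomy j j' with hlt | heq | hlt
    · have h1 := hanti j j' (le_of_lt hlt)
      have := Fin.lt_iff_val_lt_val.1 hlt
      have := j'.isLt
      omega
    · exact congrArg Sum.inr heq
    · have h1 := hanti j' j (le_of_lt hlt)
      have := Fin.lt_iff_val_lt_val.1 hlt
      have := j.isLt
      omega

noncomputable def phiEquiv {n d : ℕ} (hdn : d < n) (lam : Fin d → ℕ)
    (hanti : ∀ i j : Fin d, i ≤ j → lam j ≤ lam i) (hbox : ∀ j, lam j ≤ n - d) :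
    (Fin (n - d) ⊕ Fin d) ≃ Fin n :=
  Equiv.ofBijective (fun x => ⟨phiFun n d lam x, phiFun_lt hdn lam hbox x⟩)
    ((Fintype.bijective_iff_injective_and_card _).2
      ⟨fun x y h => phiFun_inj lam hanti (congrArg Fin.val h),
        by simp only [Fintype.card_sum, Fintype.card_fin]; omega⟩)

@[simp] lemma phiEquiv_apply {n d : ℕ} (hdn : d < n) (lam : Fin d → ℕ)
    (hanti : ∀ i j : Fin d, i ≤ j → lam j ≤ lam i) (hbox : ∀ j, lam j ≤ n - d)
    (x : Fin (n - d) ⊕ Fin d) :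
    (phiEquiv hdn lam hanti hbox x : ℕ) = phiFun n d lam x := rfl

lemma sum_conjPart {n d : ℕ} (lam : Fin d → ℕ) (hbox : ∀ j, lam j ≤ n - d) :
    ∑ i ∈ Finset.range (n - d), conjPart lam i = ∑ j, lam j := by
  classical
  have : ∀ i, conjPart lam i = ∑ j : Fin d, if i + 1 ≤ lam j then 1 else 0 := by
    intro i; rw [conjPart, Finset.card_filter]
  simp_rw [this]
  rw [Finset.sum_comm]
  refine Finset.sum_congr rfl fun j _ => ?_
  rw [← Finset.card_filter]
  have : (Finset.range (n - d)).filter (fun i => i + 1 ≤ lam j) = Finset.range (lam j) := by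
    ext i
    simp only [Finset.mem_filter, Finset.mem_range]
    have := hbox j
    omega
  rw [this, Finset.card_range]




variable {R : Type*} [CommRing R]

lemma expand_prod (d : ℕ) (r : Fin d) :
    ∑ l ∈ Finset.range (d + 1), (-1 : MvPolynomial (Fin d) R) ^ l * eInt R d l * X r ^ (d - l)
      = ∏ i : Fin d, (X r - X i) := by
  classical
  have h1 : ∀ i ∈ (Finset.univ : Finset (Fin d)),
      (X r - X i : MvPolynomial (Fin d) R) = (- X i) + X r := fun i _ => by ring
  rw [Finset.prod_congr rfl h1, Finset.prod_add, Finset.sum_powerset]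
  simp only [Finset.card_univ, Fintype.card_fin]
  refine Finset.sum_congr rfl fun l hl => ?_
  rw [Finset.mem_range] at hl
  have hterm : ∀ t ∈ (Finset.univ : Finset (Fin d)).powersetCard l,
      (∏ i ∈ t, (- X i : MvPolynomial (Fin d) R)) * ∏ _i ∈ Finset.univ \ t, (X r : MvPolynomial (Fin d) R)
        = (-1) ^ l * (∏ i ∈ t, X i) * X r ^ (d - l) := by
    intro t ht
    rw [Finset.mem_powersetCard_univ] at ht
    have c1 : ∏ i ∈ t, (- X i : MvPolynomial (Fin d) R) = (-1) ^ l * ∏ i ∈ t, X i := by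
      rw [← ht]
      rw [show (fun i => (- X i : MvPolynomial (Fin d) R)) = fun i => (-1) * X i by funext i; ring]
      rw [Finset.prod_mul_distrib, Finset.prod_const]
    have c2 : ∏ _i ∈ Finset.univ \ t, (X r : MvPolynomial (Fin d) R) = X r ^ (d - l) := by
      rw [Finset.prod_const, Finset.card_sdiff_of_subset (Finset.subset_univ t), ht, Finset.card_univ,
        Fintype.card_fin]
    rw [c1, c2]
  rw [Finset.sum_congr rfl hterm, ← Finset.sum_mul, ← Finset.mul_sum, eInt_coe, mul_assoc]

lemma sum_eInt_zero (d : ℕ) (r : Fin d) :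
    ∑ l ∈ Finset.range (d + 1), (-1 : MvPolynomial (Fin d) R) ^ (d - l) * eInt R d l * X r ^ (d - l)
      = 0 := by
  have key : ∀ l ∈ Finset.range (d + 1),
      ((-1 : MvPolynomial (Fin d) R) ^ (d - l) * eInt R d l * X r ^ (d - l))
        = (-1) ^ d * ((-1) ^ l * eInt R d l * X r ^ (d - l)) := by
    intro l hl
    rw [Finset.mem_range] at hl
    have : ((-1 : MvPolynomial (Fin d) R)) ^ (d - l) = (-1) ^ d * (-1) ^ l := by
      rw [← pow_add, neg_one_pow_eq_pow_mod_two, neg_one_pow_eq_pow_mod_two (n := d + l)]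
      congr 1
      omega
    rw [this]; ring
  rw [Finset.sum_congr rfl key, ← Finset.mul_sum, expand_prod]
  rw [Finset.prod_eq_zero (Finset.mem_univ r) (sub_self (X r)), mul_zero]

lemma vanish {n d : ℕ} (m : ℕ) (hdm : d ≤ m) (hmn : m < n) (r : Fin d) :
    ∑ k : Fin n, (-1 : MvPolynomial (Fin d) R) ^ (k : ℕ) * eInt R d ((m : ℤ) - (k : ℕ))
      * X r ^ (k : ℕ) = 0 := by
  rw [Fin.sum_univ_eq_sum_range
    (fun k => (-1 : MvPolynomial (Fin d) R) ^ k * eInt R d ((m : ℤ) - k) * X r ^ k) n]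
  rw [← Finset.sum_subset (Finset.range_subset_range.2 (show m + 1 ≤ n by omega))
    (fun k _ hk => by
      rw [Finset.mem_range, not_lt] at hk
      rw [eInt_neg R d (by omega : (m : ℤ) - k < 0), mul_zero, zero_mul])]
  rw [← Finset.sum_range_reflect]
  simp only [Nat.add_sub_cancel]
  have step : ∀ l ∈ Finset.range (m + 1),
      (-1 : MvPolynomial (Fin d) R) ^ (m - l) * eInt R d ((m : ℤ) - ((m - l : ℕ) : ℤ)) * X r ^ (m - l)
        = (-1) ^ (m - l) * eInt R d l * X r ^ (m - l) := by
    intro l hl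
    rw [Finset.mem_range] at hl
    congr 2
    · congr 1
      omega
  rw [Finset.sum_congr rfl step]
  rw [← Finset.sum_subset (Finset.range_subset_range.2 (show d + 1 ≤ m + 1 by omega))
    (fun l hl hld => by
      rw [Finset.mem_range, not_lt] at hld
      rw [eInt_gt R d (by omega : (d : ℤ) < l), mul_zero, zero_mul])]
  have step2 : ∀ l ∈ Finset.range (d + 1),
      (-1 : MvPolynomial (Fin d) R) ^ (m - l) * eInt R d l * X r ^ (m - l)
        = ((-1) ^ (m - d) * X r ^ (m - d)) * ((-1) ^ (d - l) * eInt R d l * X r ^ (d - l)) := by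
    intro l hl
    rw [Finset.mem_range] at hl
    have e1 : m - l = (m - d) + (d - l) := by omega
    rw [e1, pow_add, pow_add]
    ring
  rw [Finset.sum_congr rfl step2, ← Finset.mul_sum, sum_eInt_zero, mul_zero]




lemma zero_anti {d : ℕ} : ∀ i j : Fin d, i ≤ j → (fun _ : Fin d => 0) j ≤ (fun _ : Fin d => 0) i :=
  fun _ _ _ => le_refl _

lemma zero_box {n d : ℕ} : ∀ j : Fin d, (fun _ : Fin d => 0) j ≤ n - d := fun _ => Nat.zero_le _

-- conjugate partition facts for removing a corner box
lemma conj_update_ne {d : ℕ} (lam : Fin d → ℕ) (j₀ : Fin d) (i : ℕ) (hi : i + 1 ≠ lam j₀) :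
    conjPart (Function.update lam j₀ (lam j₀ - 1)) i = conjPart lam i := by
  unfold conjPart
  congr 1
  ext j
  simp only [Finset.mem_filter, Finset.mem_univ, true_and]
  by_cases hj : j = j₀
  · subst hj
    rw [Function.update_self]
    omega
  · rw [Function.update_of_ne hj]

lemma conj_corner {d : ℕ} (lam : Fin d → ℕ) (j₀ : Fin d)
    (hanti : ∀ i j : Fin d, i ≤ j → lam j ≤ lam i)
    (hne : lam j₀ ≠ 0) (hmax : ∀ j : Fin d, lam j ≠ 0 → j ≤ j₀) :
    conjPart lam (lam j₀ - 1) = (j₀ : ℕ) + 1 := by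
  unfold conjPart
  have h : (Finset.univ.filter fun j : Fin d => lam j₀ - 1 + 1 ≤ lam j) = Finset.Iic j₀ := by
    ext j
    simp only [Finset.mem_filter, Finset.mem_univ, true_and, Finset.mem_Iic]
    constructor
    · intro h
      by_contra hc
      push_neg at hc
      have hz : lam j = 0 := by
        by_contra h0
        exact absurd (hmax j h0) (not_le.2 hc)
      omega
    · intro h
      have := hanti j j₀ h
      omega
  rw [h, Fin.card_Iic]

lemma conj_corner_update {d : ℕ} (lam : Fin d → ℕ) (j₀ : Fin d)
    (hanti : ∀ i j : Fin d, i ≤ j → lam j ≤ lam i)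
    (hne : lam j₀ ≠ 0) (hmax : ∀ j : Fin d, lam j ≠ 0 → j ≤ j₀) :
    conjPart (Function.update lam j₀ (lam j₀ - 1)) (lam j₀ - 1) = (j₀ : ℕ) := by
  unfold conjPart
  have h : (Finset.univ.filter fun j : Fin d =>
      lam j₀ - 1 + 1 ≤ Function.update lam j₀ (lam j₀ - 1) j) = Finset.Iio j₀ := by
    ext j
    simp only [Finset.mem_filter, Finset.mem_univ, true_and, Finset.mem_Iio]
    by_cases hj : j = j₀
    · subst hj
      rw [Function.update_self]
      simp only [Finset.mem_Iio, lt_irrefl, iff_false]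
      omega
    · rw [Function.update_of_ne hj]
      constructor
      · intro h
        rcases lt_or_ge j j₀ with h' | h'
        · exact h'
        · have hz : lam j = 0 ∨ j ≤ j₀ := by
            by_cases h0 : lam j = 0
            · exact Or.inl h0
            · exact Or.inr (hmax j h0)
          rcases hz with h0 | hle
          · omega
          · exact lt_of_le_of_ne hle hj
      · intro h
        have := hanti j j₀ (le_of_lt h)
        omega
  rw [h, Fin.card_Iio]

lemma sign_phi {n d : ℕ} (hd : 0 < d) (hdn : d < n) (s : ℕ) :
    ∀ (lam : Fin d → ℕ) (hanti : ∀ i j : Fin d, i ≤ j → lam j ≤ lam i)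
      (hbox : ∀ j, lam j ≤ n - d), (∑ j, lam j) = s →
      Equiv.Perm.sign ((phiEquiv hdn lam hanti hbox).trans
        (phiEquiv hdn (fun _ => 0) zero_anti zero_box).symm) = (-1) ^ s := by
  induction s with
  | zero =>
    intro lam hanti hbox hsum
    have hz : ∀ j, lam j = 0 := by
      intro j
      have := Finset.sum_eq_zero_iff.1 hsum j (Finset.mem_univ j)
      exact this
    have hl : lam = fun _ => 0 := funext hz
    subst hl
    have : phiEquiv hdn (fun _ : Fin d => 0) hanti hbox
        = phiEquiv hdn (fun _ => 0) zero_anti zero_box := rfl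
    rw [this, Equiv.self_trans_symm]
    simp
  | succ s ih =>
    intro lam hanti hbox hsum
    classical
    -- find the corner box
    have hF : (Finset.univ.filter fun j : Fin d => lam j ≠ 0).Nonempty := by
      rw [Finset.filter_nonempty_iff]
      by_contra hc
      push_neg at hc
      have : ∑ j, lam j = 0 := Finset.sum_eq_zero fun j _ => hc j (Finset.mem_univ j)
      omega
    set j₀ : Fin d := (Finset.univ.filter fun j : Fin d => lam j ≠ 0).max' hF with hj₀def
    have hj₀ : lam j₀ ≠ 0 := by
      have := Finset.max'_mem _ hF
      rw [Finset.mem_filter] at this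
      exact this.2
    have hmax : ∀ j : Fin d, lam j ≠ 0 → j ≤ j₀ := fun j hj =>
      Finset.le_max' _ j (Finset.mem_filter.2 ⟨Finset.mem_univ _, hj⟩)
    have hcd : 0 < n - d := by omega
    have histar : lam j₀ - 1 < n - d := by
      have := hbox j₀
      omega
    set istar : Fin (n - d) := ⟨lam j₀ - 1, histar⟩ with histar_def
    set lam₂ : Fin d → ℕ := Function.update lam j₀ (lam j₀ - 1) with hlam₂
    have hanti₂ : ∀ i j : Fin d, i ≤ j → lam₂ j ≤ lam₂ i := by
      intro i j hij
      by_cases hj : j = j₀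
      · subst hj
        by_cases hi : i = j₀
        · subst hi; exact le_refl _
        · rw [hlam₂, Function.update_self, Function.update_of_ne hi]
          have := hanti i j₀ hij
          omega
      · rw [hlam₂, Function.update_of_ne hj]
        by_cases hi : i = j₀
        · subst hi
          rw [Function.update_self]
          have hz : lam j = 0 := by
            by_contra h0
            exact hj (le_antisymm (hmax j h0) hij)
          omega
        · rw [Function.update_of_ne hi]
          exact hanti i j hij
    have hbox₂ : ∀ j, lam₂ j ≤ n - d := by
      intro j
      by_cases hj : j = j₀
      · subst hj
        rw [hlam₂, Function.update_self]
        have := hbox j₀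
        omega
      · rw [hlam₂, Function.update_of_ne hj]
        exact hbox j
    have hsum₂ : ∑ j, lam₂ j = s := by
      have h1 : ∑ j, lam₂ j = lam j₀ - 1 + ∑ j ∈ Finset.univ.erase j₀, lam j := by
        rw [hlam₂, Finset.sum_update_of_mem (Finset.mem_univ j₀)]
        congr 1
        apply Finset.sum_congr
        · rw [Finset.sdiff_singleton_eq_erase]
        · intros; rfl
      have h2 : ∑ j, lam j = lam j₀ + ∑ j ∈ Finset.univ.erase j₀, lam j := by
        rw [Finset.add_sum_erase _ lam (Finset.mem_univ j₀)]
      omega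
    -- the swap relation
    have hswap : phiEquiv hdn lam hanti hbox
        = (Equiv.swap (Sum.inl istar) (Sum.inr j₀)).trans (phiEquiv hdn lam₂ hanti₂ hbox₂) := by
      apply Equiv.ext
      intro x
      apply Fin.val_injective
      rw [Equiv.trans_apply, phiEquiv_apply, phiEquiv_apply]
      by_cases h1 : x = Sum.inl istar
      · subst h1
        rw [Equiv.swap_apply_left]
        show d + (istar : ℕ) - conjPart lam istar = lam₂ j₀ + (d - 1 - (j₀ : ℕ))
        have hc := conj_corner lam j₀ hanti hj₀ hmax
        have : (istar : ℕ) = lam j₀ - 1 := rfl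
        rw [this, hc, hlam₂, Function.update_self]
        have := j₀.isLt
        omega
      · by_cases h2 : x = Sum.inr j₀
        · subst h2
          rw [Equiv.swap_apply_right]
          show lam j₀ + (d - 1 - (j₀ : ℕ)) = d + (istar : ℕ) - conjPart lam₂ istar
          have hc := conj_corner_update lam j₀ hanti hj₀ hmax
          have hv : (istar : ℕ) = lam j₀ - 1 := rfl
          rw [hv, hlam₂] at *
          rw [hc]
          have := j₀.isLt
          omega
        · rw [Equiv.swap_apply_of_ne_of_ne h1 h2]
          rcases x with i | j
          · show d + (i : ℕ) - conjPart lam i = d + (i : ℕ) - conjPart lam₂ i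
            have hne' : (i : ℕ) + 1 ≠ lam j₀ := by
              intro hc
              apply h1
              congr 1
              apply Fin.val_injective
              rw [histar_def]
              show (i : ℕ) = lam j₀ - 1
              omega
            rw [hlam₂, conj_update_ne lam j₀ _ hne']
          · show lam j + _ = lam₂ j + _
            have : j ≠ j₀ := fun hc => h2 (by rw [hc])
            rw [hlam₂, Function.update_of_ne this]
    rw [hswap, Equiv.trans_assoc]
    have : (Equiv.swap (Sum.inl istar) (Sum.inr j₀)).trans
        ((phiEquiv hdn lam₂ hanti₂ hbox₂).trans
          (phiEquiv hdn (fun _ => 0) zero_anti zero_box).symm)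
        = ((phiEquiv hdn lam₂ hanti₂ hbox₂).trans
            (phiEquiv hdn (fun _ => 0) zero_anti zero_box).symm)
          * (Equiv.swap (Sum.inl istar) (Sum.inr j₀)) := rfl
    rw [this, Equiv.Perm.sign_mul, ih lam₂ hanti₂ hbox₂ hsum₂,
      Equiv.Perm.sign_swap (by simp), pow_succ]



variable {R : Type*} [CommRing R]

noncomputable def Mmat (R : Type*) [CommRing R] (n d : ℕ) :
    Matrix (Fin (n - d) ⊕ Fin d) (Fin n) (MvPolynomial (Fin d) R) :=
  Matrix.of fun u k => Sum.elim
    (fun i : Fin (n - d) =>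
      (-1 : MvPolynomial (Fin d) R) ^ (k : ℕ) * eInt R d (((d + (i : ℕ) : ℕ) : ℤ) - (k : ℕ)))
    (fun j : Fin d => if (k : ℕ) = d - 1 - (j : ℕ) then 1 else 0) u

noncomputable def Nmat (R : Type*) [CommRing R] (n d : ℕ) (lam : Fin d → ℕ) :
    Matrix (Fin n) (Fin (n - d) ⊕ Fin d) (MvPolynomial (Fin d) R) :=
  Matrix.of fun k v => Sum.elim
    (fun i : Fin (n - d) => if (k : ℕ) = d + (i : ℕ) - conjPart lam i then 1 else 0)
    (fun r : Fin d => (X r : MvPolynomial (Fin d) R) ^ (k : ℕ)) v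

lemma conjPart_zero {d : ℕ} (i : ℕ) : conjPart (fun _ : Fin d => 0) i = 0 := by
  simp [conjPart]

lemma hindR {n d : ℕ} (b : Fin n) (t : ℕ) (hb : (b : ℕ) = t) (f : Fin n → MvPolynomial (Fin d) R) :
    (∑ k : Fin n, f k * (if (k : ℕ) = t then 1 else 0)) = f b := by
  rw [Finset.sum_eq_single b]
  · rw [if_pos hb, mul_one]
  · intro k _ hk
    rw [if_neg (fun hc => hk (Fin.ext (by omega))), mul_zero]
  · intro h; exact absurd (Finset.mem_univ b) h

lemma hindL {n d : ℕ} (b : Fin n) (t : ℕ) (hb : (b : ℕ) = t) (f : Fin n → MvPolynomial (Fin d) R) :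
    (∑ k : Fin n, (if (k : ℕ) = t then 1 else 0) * f k) = f b := by
  rw [Finset.sum_eq_single b]
  · rw [if_pos hb, one_mul]
  · intro k _ hk
    rw [if_neg (fun hc => hk (Fin.ext (by omega))), zero_mul]
  · intro h; exact absurd (Finset.mem_univ b) h

lemma MN_eq (n d : ℕ) (hdn : d < n) (lam : Fin d → ℕ) :
    Mmat R n d * Nmat R n d lam = Matrix.fromBlocks
      (Matrix.of fun i i' : Fin (n - d) =>
        (-1 : MvPolynomial (Fin d) R) ^ (d + (i' : ℕ) - conjPart lam i') *
          eInt R d (((d + (i : ℕ) : ℕ) : ℤ) - ((d + (i' : ℕ) - conjPart lam i' : ℕ) : ℤ)))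
      0
      (Matrix.of fun (j : Fin d) (i' : Fin (n - d)) =>
        if d - 1 - (j : ℕ) = d + (i' : ℕ) - conjPart lam i' then (1 : MvPolynomial (Fin d) R)
        else 0)
      (Matrix.of fun (j r : Fin d) => (X r : MvPolynomial (Fin d) R) ^ (d - 1 - (j : ℕ))) := by
  have hd1 : ∀ j : Fin d, d - 1 - (j : ℕ) < n := fun j => by have := j.isLt; omega
  have ha : ∀ i' : Fin (n - d), d + (i' : ℕ) - conjPart lam i' < n := fun i' => by
    have := i'.isLt; have := conjPart_le lam (i' : ℕ); omega
  apply Matrix.ext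
  intro u v
  rcases u with i | j <;> rcases v with i' | r
  · rw [Matrix.fromBlocks_apply₁₁, Matrix.mul_apply]
    have := hindR (R := R) (d := d) ⟨d + (i' : ℕ) - conjPart lam i', ha i'⟩ _ rfl
      (fun k : Fin n =>
        (-1 : MvPolynomial (Fin d) R) ^ (k : ℕ) * eInt R d (((d + (i : ℕ) : ℕ) : ℤ) - (k : ℕ)))
    simp only [Mmat, Nmat, Matrix.of_apply, Sum.elim_inl, Sum.elim_inr]
    exact this
  · rw [Matrix.fromBlocks_apply₁₂, Matrix.mul_apply]
    simp only [Mmat, Nmat, Matrix.of_apply, Sum.elim_inl, Sum.elim_inr, Matrix.zero_apply]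
    exact vanish (d + (i : ℕ)) (Nat.le_add_right d i) (by have := i.isLt; omega) r
  · rw [Matrix.fromBlocks_apply₂₁, Matrix.mul_apply]
    have := hindL (R := R) ⟨d - 1 - (j : ℕ), hd1 j⟩ _ rfl
      (fun k : Fin n => if (k : ℕ) = d + (i' : ℕ) - conjPart lam i' then
        (1 : MvPolynomial (Fin d) R) else 0)
    simp only [Mmat, Nmat, Matrix.of_apply, Sum.elim_inl, Sum.elim_inr]
    exact this
  · rw [Matrix.fromBlocks_apply₂₂, Matrix.mul_apply]
    have := hindL (R := R) ⟨d - 1 - (j : ℕ), hd1 j⟩ _ rfl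
      (fun k : Fin n => (X r : MvPolynomial (Fin d) R) ^ (k : ℕ))
    simp only [Mmat, Nmat, Matrix.of_apply, Sum.elim_inl, Sum.elim_inr]
    exact this


lemma Nsub_eq (n d : ℕ) (hdn : d < n) (lam : Fin d → ℕ)
    (hanti : ∀ i j : Fin d, i ≤ j → lam j ≤ lam i) (hbox : ∀ j, lam j ≤ n - d) :
    (Nmat R n d lam).submatrix (phiEquiv hdn lam hanti hbox) id
      = Matrix.fromBlocks 1
          (Matrix.of fun (i : Fin (n - d)) (r : Fin d) =>
            (X r : MvPolynomial (Fin d) R) ^ (d + (i : ℕ) - conjPart lam i))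
          0
          (Matrix.of fun (j r : Fin d) =>
            (X r : MvPolynomial (Fin d) R) ^ (lam j + (d - 1 - (j : ℕ)))) := by
  apply Matrix.ext
  intro w v
  rcases w with i' | j <;> rcases v with i | r
  · rw [Matrix.fromBlocks_apply₁₁, Matrix.submatrix_apply, Matrix.one_apply]
    show (if ((phiEquiv hdn lam hanti hbox (Sum.inl i') : Fin n) : ℕ)
        = d + (i : ℕ) - conjPart lam i then (1 : MvPolynomial (Fin d) R) else 0) = _
    rw [phiEquiv_apply]
    by_cases h : i' = i
    · subst h
      rw [if_pos (show phiFun n d lam (Sum.inl i') = d + (i' : ℕ) - conjPart lam i' from rfl),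
        if_pos rfl]
    · rw [if_neg h, if_neg]
      intro hc
      exact h (Sum.inl.inj (phiFun_inj lam hanti
        (show phiFun n d lam (Sum.inl i') = phiFun n d lam (Sum.inl i) from hc)))
  · rw [Matrix.fromBlocks_apply₁₂, Matrix.submatrix_apply]
    show (X r : MvPolynomial (Fin d) R) ^ ((phiEquiv hdn lam hanti hbox (Sum.inl i') : Fin n) : ℕ)
        = _
    rw [phiEquiv_apply]
    rfl
  · rw [Matrix.fromBlocks_apply₂₁, Matrix.submatrix_apply]
    show (if ((phiEquiv hdn lam hanti hbox (Sum.inr j) : Fin n) : ℕ)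
        = d + (i : ℕ) - conjPart lam i then (1 : MvPolynomial (Fin d) R) else 0) = 0
    rw [phiEquiv_apply, if_neg]
    intro hc
    exact Sum.inr_ne_inl (phiFun_inj lam hanti
      (show phiFun n d lam (Sum.inr j) = phiFun n d lam (Sum.inl i) from hc))
  · rw [Matrix.fromBlocks_apply₂₂, Matrix.submatrix_apply]
    show (X r : MvPolynomial (Fin d) R) ^ ((phiEquiv hdn lam hanti hbox (Sum.inr j) : Fin n) : ℕ)
        = _
    rw [phiEquiv_apply]
    rfl

lemma Mpsi_eq (n d : ℕ) (hdn : d < n) :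
    (Mmat R n d).submatrix id (phiEquiv hdn (fun _ => 0) zero_anti zero_box)
      = Matrix.fromBlocks
          (Matrix.of fun i i' : Fin (n - d) =>
            (-1 : MvPolynomial (Fin d) R) ^ (d + (i' : ℕ)) *
              eInt R d (((d + (i : ℕ) : ℕ) : ℤ) - ((d + (i' : ℕ) : ℕ) : ℤ)))
          (Matrix.of fun (i : Fin (n - d)) (j' : Fin d) =>
            (-1 : MvPolynomial (Fin d) R) ^ (d - 1 - (j' : ℕ)) *
              eInt R d (((d + (i : ℕ) : ℕ) : ℤ) - ((d - 1 - (j' : ℕ) : ℕ) : ℤ)))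
          0 1 := by
  have hvl : ∀ i' : Fin (n - d),
      ((phiEquiv hdn (fun _ : Fin d => 0) zero_anti zero_box (Sum.inl i') : Fin n) : ℕ)
        = d + (i' : ℕ) := by
    intro i'
    rw [phiEquiv_apply]
    show d + (i' : ℕ) - conjPart (fun _ : Fin d => 0) i' = d + (i' : ℕ)
    rw [conjPart_zero]
    omega
  have hvr : ∀ j' : Fin d,
      ((phiEquiv hdn (fun _ : Fin d => 0) zero_anti zero_box (Sum.inr j') : Fin n) : ℕ)
        = d - 1 - (j' : ℕ) := by
    intro j'
    rw [phiEquiv_apply]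
    show (0 : ℕ) + (d - 1 - (j' : ℕ)) = d - 1 - (j' : ℕ)
    rw [Nat.zero_add]
  apply Matrix.ext
  intro u w
  rcases u with i | j <;> rcases w with i' | j'
  · rw [Matrix.fromBlocks_apply₁₁, Matrix.submatrix_apply]
    show (-1 : MvPolynomial (Fin d) R) ^
          ((phiEquiv hdn (fun _ : Fin d => 0) zero_anti zero_box (Sum.inl i') : Fin n) : ℕ)
        * eInt R d (((d + (i : ℕ) : ℕ) : ℤ) -
          ((phiEquiv hdn (fun _ : Fin d => 0) zero_anti zero_box (Sum.inl i') : Fin n) : ℕ)) = _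
    rw [hvl]
    rfl
  · rw [Matrix.fromBlocks_apply₁₂, Matrix.submatrix_apply]
    show (-1 : MvPolynomial (Fin d) R) ^
          ((phiEquiv hdn (fun _ : Fin d => 0) zero_anti zero_box (Sum.inr j') : Fin n) : ℕ)
        * eInt R d (((d + (i : ℕ) : ℕ) : ℤ) -
          ((phiEquiv hdn (fun _ : Fin d => 0) zero_anti zero_box (Sum.inr j') : Fin n) : ℕ)) = _
    rw [hvr]
    rfl
  · rw [Matrix.fromBlocks_apply₂₁, Matrix.submatrix_apply]
    show (if ((phiEquiv hdn (fun _ : Fin d => 0) zero_anti zero_box (Sum.inl i') : Fin n) : ℕ)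
        = d - 1 - (j : ℕ) then (1 : MvPolynomial (Fin d) R) else 0) = 0
    rw [hvl, if_neg]
    have := j.isLt
    omega
  · rw [Matrix.fromBlocks_apply₂₂, Matrix.submatrix_apply, Matrix.one_apply]
    show (if ((phiEquiv hdn (fun _ : Fin d => 0) zero_anti zero_box (Sum.inr j') : Fin n) : ℕ)
        = d - 1 - (j : ℕ) then (1 : MvPolynomial (Fin d) R) else 0) = _
    rw [hvr]
    by_cases h : j = j'
    · subst h
      rw [if_pos rfl, if_pos rfl]
    · rw [if_neg, if_neg h]
      have h1 := j.isLt
      have h2 := j'.isLt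
      intro hc
      exact h (Fin.ext (by omega)).symm

lemma detW (n d : ℕ) :
    (Matrix.of fun i i' : Fin (n - d) =>
      eInt R d (((d + (i : ℕ) : ℕ) : ℤ) - ((d + (i' : ℕ) : ℕ) : ℤ))).det = 1 := by
  rw [Matrix.det_of_lowerTriangular _ (by
    intro i j hij
    have hij' : i < j := hij
    apply eInt_neg
    have : (i : ℕ) < (j : ℕ) := hij'
    omega)]
  apply Finset.prod_eq_one
  intro i _
  rw [Matrix.of_apply, sub_self, eInt_zero]

lemma detMpsi (n d : ℕ) (hdn : d < n) :
    ((Mmat R n d).submatrix id (phiEquiv hdn (fun _ => 0) zero_anti zero_box)).det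
      = (-1 : MvPolynomial (Fin d) R) ^ (∑ i : Fin (n - d), (d + (i : ℕ))) := by
  rw [Mpsi_eq n d hdn, Matrix.det_fromBlocks_zero₂₁, Matrix.det_one, mul_one]
  have hrw : (Matrix.of fun i i' : Fin (n - d) =>
        (-1 : MvPolynomial (Fin d) R) ^ (d + (i' : ℕ)) *
          eInt R d (((d + (i : ℕ) : ℕ) : ℤ) - ((d + (i' : ℕ) : ℕ) : ℤ)))
      = Matrix.of fun i i' => (fun i'' : Fin (n - d) =>
          (-1 : MvPolynomial (Fin d) R) ^ (d + (i'' : ℕ))) i' *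
          (Matrix.of fun i i' : Fin (n - d) =>
            eInt R d (((d + (i : ℕ) : ℕ) : ℤ) - ((d + (i' : ℕ) : ℕ) : ℤ))) i i' := rfl
  rw [hrw, Matrix.det_mul_row, detW, mul_one, Finset.prod_pow_eq_pow_sum]

end DJT

open DJT

/-- Dual Jacobi–Trudi: for a partition `λ` in a `d × (n−d)` box with conjugate `λ'`,
the Schur polynomial `s_λ(x_1,...,x_d)` — characterized by the bialternant formula
`s_λ · det(x_i^{d-j}) = det(x_i^{λ_j + d - j})` — equals
`det( e_{λ'_i − i + j} )_{i,j=1}^{c}` with `c = n − d`. -/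
theorem dual_jacobi_trudi (R : Type*) [CommRing R] (n d : ℕ) (hd : 0 < d) (hdn : d < n)
    (lam : Fin d → ℕ) (hanti : ∀ i j : Fin d, i ≤ j → lam j ≤ lam i)
    (hbox : ∀ i, lam i ≤ n - d) :
    (Matrix.of fun i j : Fin (n - d) =>
        eInt R d (((conjPart lam (i : ℕ) : ℤ) - (i : ℕ)) + (j : ℕ))).det *
      (Matrix.of fun i j : Fin d => (X i : MvPolynomial (Fin d) R) ^ (d - 1 - (j : ℕ))).det
    = (Matrix.of fun i j : Fin d =>
        (X i : MvPolynomial (Fin d) R) ^ (lam j + (d - 1 - (j : ℕ)))).det := by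
  classical
  set T : Matrix (Fin (n - d)) (Fin (n - d)) (MvPolynomial (Fin d) R) :=
    Matrix.of fun i j : Fin (n - d) =>
      eInt R d (((conjPart lam (i : ℕ) : ℤ) - (i : ℕ)) + (j : ℕ)) with hT
  set V : Matrix (Fin d) (Fin d) (MvPolynomial (Fin d) R) :=
    Matrix.of fun i j : Fin d => (X i : MvPolynomial (Fin d) R) ^ (d - 1 - (j : ℕ)) with hV
  set G : Matrix (Fin d) (Fin d) (MvPolynomial (Fin d) R) :=
    Matrix.of fun i j : Fin d =>
      (X i : MvPolynomial (Fin d) R) ^ (lam j + (d - 1 - (j : ℕ))) with hG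
  set φ := phiEquiv hdn lam hanti hbox with hφ
  set ψ := phiEquiv hdn (fun _ => 0) zero_anti zero_box with hψ
  set e : Equiv.Perm (Fin (n - d) ⊕ Fin d) := φ.trans ψ.symm with he
  -- determinant of the product, block way
  have hAdet : (Matrix.of fun i i' : Fin (n - d) =>
        (-1 : MvPolynomial (Fin d) R) ^ (d + (i' : ℕ) - conjPart lam i') *
          eInt R d (((d + (i : ℕ) : ℕ) : ℤ) - ((d + (i' : ℕ) - conjPart lam i' : ℕ) : ℤ))).det
      = (-1 : MvPolynomial (Fin d) R) ^ (∑ i : Fin (n - d), (d + (i : ℕ) - conjPart lam i))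
        * T.det := by
    have hrw : (Matrix.of fun i i' : Fin (n - d) =>
          (-1 : MvPolynomial (Fin d) R) ^ (d + (i' : ℕ) - conjPart lam i') *
            eInt R d (((d + (i : ℕ) : ℕ) : ℤ) - ((d + (i' : ℕ) - conjPart lam i' : ℕ) : ℤ)))
        = Matrix.of fun i i' => (fun i'' : Fin (n - d) =>
            (-1 : MvPolynomial (Fin d) R) ^ (d + (i'' : ℕ) - conjPart lam i'')) i' *
            (Matrix.of fun i i' : Fin (n - d) =>
              eInt R d (((d + (i : ℕ) : ℕ) : ℤ)
                - ((d + (i' : ℕ) - conjPart lam i' : ℕ) : ℤ))) i i' := rfl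
    rw [hrw, Matrix.det_mul_row, Finset.prod_pow_eq_pow_sum]
    congr 1
    have hWT : (Matrix.of fun i i' : Fin (n - d) =>
        eInt R d (((d + (i : ℕ) : ℕ) : ℤ) - ((d + (i' : ℕ) - conjPart lam i' : ℕ) : ℤ)))
        = T.transpose := by
      apply Matrix.ext
      intro i i'
      rw [Matrix.of_apply, Matrix.transpose_apply, hT, Matrix.of_apply]
      congr 1
      have h1 := conjPart_le lam (i' : ℕ)
      omega
    rw [hWT, Matrix.det_transpose]
  have hDdet : (Matrix.of fun (j r : Fin d) =>
        (X r : MvPolynomial (Fin d) R) ^ (d - 1 - (j : ℕ))).det = V.det := by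
    have hVT : (Matrix.of fun (j r : Fin d) =>
        (X r : MvPolynomial (Fin d) R) ^ (d - 1 - (j : ℕ))) = V.transpose := by
      apply Matrix.ext
      intro j r
      rfl
    rw [hVT, Matrix.det_transpose]
  have E1 : (Mmat R n d * Nmat R n d lam).det
      = ((-1 : MvPolynomial (Fin d) R) ^ (∑ i : Fin (n - d), (d + (i : ℕ) - conjPart lam i))
          * T.det) * V.det := by
    rw [MN_eq n d hdn lam, Matrix.det_fromBlocks_zero₁₂, hAdet, hDdet]
  -- determinant of the product, factored way
  have E2 : (Mmat R n d * Nmat R n d lam).det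
      = ((Mmat R n d).submatrix id φ).det * ((Nmat R n d lam).submatrix φ id).det := by
    rw [← Matrix.det_mul, Matrix.submatrix_mul_equiv, Matrix.submatrix_id_id]
  have hNdet : ((Nmat R n d lam).submatrix φ id).det = G.det := by
    rw [hφ, Nsub_eq n d hdn lam hanti hbox, Matrix.det_fromBlocks_zero₂₁, Matrix.det_one, one_mul]
    have hGT : (Matrix.of fun (j r : Fin d) =>
        (X r : MvPolynomial (Fin d) R) ^ (lam j + (d - 1 - (j : ℕ)))) = G.transpose := by
      apply Matrix.ext
      intro j r
      rfl
    rw [hGT, Matrix.det_transpose]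
  have hMdet : ((Mmat R n d).submatrix id φ).det
      = (((Equiv.Perm.sign e : ℤ) : MvPolynomial (Fin d) R))
          * (-1 : MvPolynomial (Fin d) R) ^ (∑ i : Fin (n - d), (d + (i : ℕ))) := by
    have hcomp : (Mmat R n d).submatrix id ⇑φ
        = ((Mmat R n d).submatrix id ⇑ψ).submatrix id ⇑e := by
      rw [Matrix.submatrix_submatrix]
      have h1 : (id ∘ id : Fin (n - d) ⊕ Fin d → Fin (n - d) ⊕ Fin d) = id := rfl
      have h2 : (⇑ψ ∘ ⇑e) = ⇑φ := by
        funext x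
        simp [he]
      rw [h1, h2]
    rw [hcomp, Matrix.det_permute', detMpsi n d hdn]
  have hsign : (((Equiv.Perm.sign e : ℤ) : MvPolynomial (Fin d) R))
      = (-1 : MvPolynomial (Fin d) R) ^ (∑ j, lam j) := by
    rw [he, hφ, hψ, sign_phi hd hdn (∑ j, lam j) lam hanti hbox rfl]
    push_cast
    ring
  -- the exponent bookkeeping
  have hBsum : (∑ j, lam j) = ∑ i : Fin (n - d), conjPart lam (i : ℕ) := by
    rw [← sum_conjPart lam hbox, Fin.sum_univ_eq_sum_range]
  have hACB : (∑ i : Fin (n - d), (d + (i : ℕ) - conjPart lam i)) + (∑ j, lam j)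
      = ∑ i : Fin (n - d), (d + (i : ℕ)) := by
    rw [hBsum, ← Finset.sum_add_distrib]
    apply Finset.sum_congr rfl
    intro i _
    have := conjPart_le lam (i : ℕ)
    omega
  have KEY : (-1 : MvPolynomial (Fin d) R) ^ (∑ i : Fin (n - d), (d + (i : ℕ) - conjPart lam i))
      * (T.det * V.det)
      = (-1 : MvPolynomial (Fin d) R) ^ (∑ j, lam j)
        * ((-1 : MvPolynomial (Fin d) R) ^ (∑ i : Fin (n - d), (d + (i : ℕ))) * G.det) := by
    have := E1.symm.trans E2
    rw [hNdet, hMdet, hsign] at this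
    calc (-1 : MvPolynomial (Fin d) R) ^ (∑ i : Fin (n - d), (d + (i : ℕ) - conjPart lam i))
        * (T.det * V.det)
        = ((-1 : MvPolynomial (Fin d) R)
            ^ (∑ i : Fin (n - d), (d + (i : ℕ) - conjPart lam i)) * T.det) * V.det := by ring
      _ = ((-1 : MvPolynomial (Fin d) R) ^ (∑ j, lam j)
            * (-1 : MvPolynomial (Fin d) R) ^ (∑ i : Fin (n - d), (d + (i : ℕ)))) * G.det := by
          rw [this]
      _ = _ := by ring
  -- final cancellation
  have hsq : ∀ m : ℕ, (-1 : MvPolynomial (Fin d) R) ^ m * (-1) ^ m = 1 := by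
    intro m
    rw [← pow_add, ← two_mul, pow_mul, neg_one_sq, one_pow]
  calc T.det * V.det
      = ((-1 : MvPolynomial (Fin d) R) ^ (∑ i : Fin (n - d), (d + (i : ℕ) - conjPart lam i))
          * (-1) ^ (∑ i : Fin (n - d), (d + (i : ℕ) - conjPart lam i))) * (T.det * V.det) := by
        rw [hsq, one_mul]
    _ = (-1 : MvPolynomial (Fin d) R) ^ (∑ i : Fin (n - d), (d + (i : ℕ) - conjPart lam i))
          * ((-1 : MvPolynomial (Fin d) R) ^ (∑ j, lam j)
            * ((-1 : MvPolynomial (Fin d) R) ^ (∑ i : Fin (n - d), (d + (i : ℕ))) * G.det)) := by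
        rw [mul_assoc, KEY]
    _ = (-1 : MvPolynomial (Fin d) R) ^ ((∑ i : Fin (n - d), (d + (i : ℕ) - conjPart lam i))
          + (∑ j, lam j) + (∑ i : Fin (n - d), (d + (i : ℕ)))) * G.det := by
        rw [pow_add, pow_add]
        ring
    _ = G.det := by
        rw [show (∑ i : Fin (n - d), (d + (i : ℕ) - conjPart lam i)) + (∑ j, lam j)
            + (∑ i : Fin (n - d), (d + (i : ℕ))) = 2 * (∑ i : Fin (n - d), (d + (i : ℕ))) by omega,
          pow_mul, neg_one_sq, one_pow, one_mul]
end

section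
/- Let f : ℝ^k_{>0} → ℝ^k_{>0} be the map with coordinates f_j(q_1,...,q_k) determined by the relations q_j^{(n_j−n_{j−1})(n_{j+1}−n_j)} = Δ_{n_{j−1}}^{n_{j+1}−n_j} · Δ_{n_{j+1}}^{n_j−n_{j−1}} / Δ_{n_j}^{n_{j+1}−n_{j−1}} for positive reals Δ_{n_1}, ..., Δ_{n_k} (with Δ_{n_0} = Δ_{n_{k+1}} = 1): then the assignment (Δ_{n_1},...,Δ_{n_k}) ↦ (q_1,...,q_k) is a well-defined continuous bijection of ℝ^k_{>0} onto itself with continuous inverse. -/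
/-- Extension of a tuple `Δ = (Δ_{n_1},...,Δ_{n_k})` of minors by the boundary
values `Δ_{n_0} = Δ_{n_{k+1}} = 1`: `DExt k Δ m = Δ_{n_m}`. -/
noncomputable def DExt (k : ℕ) (Δ : Fin k → ℝ) (m : ℕ) : ℝ :=
  if h : 1 ≤ m ∧ m ≤ k then Δ ⟨m - 1, by omega⟩ else 1

/-- The map sending the minors `(Δ_{n_1},...,Δ_{n_k})` to the quantum parameters
`(q_1,...,q_k)`, where `q_j` is the unique positive real
`(n_j−n_{j−1})(n_{j+1}−n_j)`-th root of
`Δ_{n_{j−1}}^{n_{j+1}−n_j} Δ_{n_{j+1}}^{n_j−n_{j−1}} / Δ_{n_j}^{n_{j+1}−n_{j−1}}`.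
Here the `Fin k` index `j` stands for the (1-based) index `j+1`. -/
noncomputable def minorsToQ (k : ℕ) (ns : ℕ → ℕ) (Δ : Fin k → ℝ) : Fin k → ℝ :=
  fun j =>
    (DExt k Δ (j : ℕ) ^ (ns ((j : ℕ) + 2) - ns ((j : ℕ) + 1)) *
        DExt k Δ ((j : ℕ) + 2) ^ (ns ((j : ℕ) + 1) - ns (j : ℕ)) /
        DExt k Δ ((j : ℕ) + 1) ^ (ns ((j : ℕ) + 2) - ns (j : ℕ))) ^
      ((1 : ℝ) / (((ns ((j : ℕ) + 1) - ns (j : ℕ)) * (ns ((j : ℕ) + 2) - ns ((j : ℕ) + 1)) : ℕ) : ℝ))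

noncomputable def xE (k : ℕ) (x : Fin k → ℝ) (m : ℕ) : ℝ :=
  if h : 1 ≤ m ∧ m ≤ k then x ⟨m - 1, by omega⟩ else 0

noncomputable def Ans (ns : ℕ → ℕ) (i : ℕ) : ℝ := ((ns (i + 1) - ns i : ℕ) : ℝ)

noncomputable def Lm (k : ℕ) (ns : ℕ → ℕ) (x : Fin k → ℝ) : Fin k → ℝ := fun j =>
  (xE k x (j : ℕ) - xE k x ((j : ℕ) + 1)) / Ans ns (j : ℕ)
    + (xE k x ((j : ℕ) + 2) - xE k x ((j : ℕ) + 1)) / Ans ns ((j : ℕ) + 1)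

noncomputable def Ys (k : ℕ) (y : Fin k → ℝ) (t : ℕ) : ℝ :=
  ∑ m ∈ Finset.range t, if h : m < k then y ⟨m, h⟩ else 0

noncomputable def s1v (k n : ℕ) (ns : ℕ → ℕ) (y : Fin k → ℝ) : ℝ :=
  -(1 / (n : ℝ)) * ∑ i ∈ Finset.range (k + 1), Ans ns i * Ys k y i

noncomputable def Xm (k n : ℕ) (ns : ℕ → ℕ) (y : Fin k → ℝ) (m : ℕ) : ℝ :=
  ∑ i ∈ Finset.range m, Ans ns i * (s1v k n ns y + Ys k y i)

section lems
variable {k n : ℕ} {ns : ℕ → ℕ}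

lemma Ans_pos (hmono : ∀ j, j ≤ k → ns j < ns (j + 1)) {i : ℕ} (hi : i ≤ k) :
    0 < Ans ns i := by
  have := hmono i hi
  unfold Ans
  exact_mod_cast Nat.sub_pos_of_lt this

lemma Ans_eq (hmono : ∀ j, j ≤ k → ns j < ns (j + 1)) {i : ℕ} (hi : i ≤ k) :
    Ans ns i = (ns (i + 1) : ℝ) - (ns i : ℝ) := by
  unfold Ans
  exact_mod_cast Nat.cast_sub (le_of_lt (hmono i hi))

lemma sum_Ans (h0 : ns 0 = 0) (htop : ns (k + 1) = n)
    (hmono : ∀ j, j ≤ k → ns j < ns (j + 1)) :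
    ∑ i ∈ Finset.range (k + 1), Ans ns i = (n : ℝ) := by
  rw [Finset.sum_congr rfl (fun i hi => Ans_eq hmono (by
    simpa using Nat.lt_succ_iff.1 (Finset.mem_range.1 hi)))]
  rw [Finset.sum_range_sub (fun i => (ns i : ℝ))]
  simp [h0, htop]

lemma n_pos (htop : ns (k + 1) = n) (hmono : ∀ j, j ≤ k → ns j < ns (j + 1)) :
    0 < n := by
  have := hmono k le_rfl; omega

lemma xE_zero (x : Fin k → ℝ) : xE k x 0 = 0 := by simp [xE]

lemma xE_top (x : Fin k → ℝ) : xE k x (k + 1) = 0 := by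
  unfold xE; rw [dif_neg]; omega

lemma Xm_Lm (h0 : ns 0 = 0) (htop : ns (k + 1) = n)
    (hmono : ∀ j, j ≤ k → ns j < ns (j + 1))
    (x : Fin k → ℝ) {m : ℕ} (hm : m ≤ k + 1) :
    Xm k n ns (Lm k ns x) m = xE k x m := by
  set s : ℕ → ℝ := fun i => (xE k x (i + 1) - xE k x i) / Ans ns i with hs
  have hy : ∀ j : Fin k, Lm k ns x j = s ((j : ℕ) + 1) - s (j : ℕ) := by
    intro j; simp only [Lm, hs]; ring
  have hY : ∀ t, t ≤ k → Ys k (Lm k ns x) t = s t - s 0 := by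
    intro t ht
    have h1 : Ys k (Lm k ns x) t = ∑ m ∈ Finset.range t, (s (m + 1) - s m) := by
      refine Finset.sum_congr rfl (fun m hm => ?_)
      have hmk : m < k := lt_of_lt_of_le (Finset.mem_range.1 hm) ht
      rw [dif_pos hmk]
      exact hy ⟨m, hmk⟩
    rw [h1, Finset.sum_range_sub]
  have hAs : ∀ i, i ≤ k → Ans ns i * s i = xE k x (i + 1) - xE k x i := by
    intro i hi
    rw [hs, mul_comm, div_mul_cancel₀ _ (ne_of_gt (Ans_pos hmono hi))]
  have hsum0 : ∑ i ∈ Finset.range (k + 1), Ans ns i * s i = 0 := by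
    rw [Finset.sum_congr rfl (fun i hi => hAs i (Nat.lt_succ_iff.1 (Finset.mem_range.1 hi)))]
    rw [Finset.sum_range_sub (fun i => xE k x i), xE_zero, xE_top]
    ring
  have hn : (n : ℝ) ≠ 0 := Nat.cast_ne_zero.2 (n_pos htop hmono).ne'
  have hs1 : s1v k n ns (Lm k ns x) = s 0 := by
    unfold s1v
    rw [Finset.sum_congr rfl (fun i hi => by
      rw [hY i (Nat.lt_succ_iff.1 (Finset.mem_range.1 hi))])]
    have : ∑ i ∈ Finset.range (k + 1), Ans ns i * (s i - s 0)
        = (∑ i ∈ Finset.range (k + 1), Ans ns i * s i)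
          - (∑ i ∈ Finset.range (k + 1), Ans ns i) * s 0 := by
      rw [Finset.sum_mul, ← Finset.sum_sub_distrib]
      exact Finset.sum_congr rfl (fun i _ => by ring)
    rw [this, hsum0, sum_Ans h0 htop hmono]
    field_simp
    ring
  unfold Xm
  rw [hs1]
  rw [Finset.sum_congr rfl (fun i hi => by
    have hik : i ≤ k := by
      have := Finset.mem_range.1 hi; omega
    rw [hY i hik])]
  have htail : ∀ i ∈ Finset.range m, Ans ns i * (s 0 + (s i - s 0))
      = xE k x (i + 1) - xE k x i := by
    intro i hi
    have hik : i ≤ k := by have := Finset.mem_range.1 hi; omega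
    rw [show s 0 + (s i - s 0) = s i by ring, hAs i hik]
  rw [Finset.sum_congr rfl htail, Finset.sum_range_sub (fun i => xE k x i), xE_zero, sub_zero]

lemma Xm_zero (y : Fin k → ℝ) : Xm k n ns y 0 = 0 := by simp [Xm]

lemma Xm_succ (y : Fin k → ℝ) (m : ℕ) :
    Xm k n ns y (m + 1) = Xm k n ns y m + Ans ns m * (s1v k n ns y + Ys k y m) := by
  unfold Xm; rw [Finset.sum_range_succ]

lemma Xm_top (h0 : ns 0 = 0) (htop : ns (k + 1) = n)
    (hmono : ∀ j, j ≤ k → ns j < ns (j + 1)) (y : Fin k → ℝ) :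
    Xm k n ns y (k + 1) = 0 := by
  have hn : (n : ℝ) ≠ 0 := Nat.cast_ne_zero.2 (n_pos htop hmono).ne'
  unfold Xm s1v
  rw [Finset.sum_congr rfl (fun i _ => mul_add (Ans ns i) _ _), Finset.sum_add_distrib,
    ← Finset.sum_mul, sum_Ans h0 htop hmono]
  field_simp
  ring

lemma Lm_Xm (h0 : ns 0 = 0) (htop : ns (k + 1) = n)
    (hmono : ∀ j, j ≤ k → ns j < ns (j + 1)) (y : Fin k → ℝ) (j : Fin k) :
    Lm k ns (fun j' => Xm k n ns y ((j' : ℕ) + 1)) j = y j := by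
  have hjk : (j : ℕ) < k := j.isLt
  have hxE : ∀ m, m ≤ k + 1 → xE k (fun j' => Xm k n ns y ((j' : ℕ) + 1)) m
      = Xm k n ns y m := by
    intro m hm
    unfold xE
    by_cases h : 1 ≤ m ∧ m ≤ k
    · rw [dif_pos h]
      show Xm k n ns y ((m - 1) + 1) = Xm k n ns y m
      congr 1
      omega
    · rw [dif_neg h]
      have : m = 0 ∨ m = k + 1 := by omega
      rcases this with h' | h'
      · rw [h', Xm_zero]
      · rw [h', Xm_top h0 htop hmono]
  have hA1 : Ans ns (j : ℕ) ≠ 0 := (Ans_pos hmono (by omega)).ne'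
  have hA2 : Ans ns ((j : ℕ) + 1) ≠ 0 := (Ans_pos hmono (by omega)).ne'
  unfold Lm
  rw [hxE (j : ℕ) (by omega), hxE ((j : ℕ) + 1) (by omega), hxE ((j : ℕ) + 2) (by omega)]
  rw [Xm_succ y ((j : ℕ) + 1), Xm_succ y (j : ℕ)]
  have hYsucc : Ys k y ((j : ℕ) + 1) = Ys k y (j : ℕ) + y j := by
    unfold Ys
    rw [Finset.sum_range_succ, dif_pos hjk]
  field_simp
  rw [hYsucc]
  ring

lemma DExt_pos {Δ : Fin k → ℝ} (hΔ : ∀ j, 0 < Δ j) (m : ℕ) : 0 < DExt k Δ m := by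
  unfold DExt; split
  · exact hΔ _
  · exact one_pos

lemma log_DExt {Δ : Fin k → ℝ} (m : ℕ) :
    Real.log (DExt k Δ m) = xE k (fun i => Real.log (Δ i)) m := by
  unfold DExt xE; split
  · rfl
  · exact Real.log_one

lemma minorsToQ_eq_exp (hmono : ∀ j, j ≤ k → ns j < ns (j + 1))
    {Δ : Fin k → ℝ} (hΔ : ∀ j, 0 < Δ j) (j : Fin k) :
    minorsToQ k ns Δ j = Real.exp (Lm k ns (fun i => Real.log (Δ i)) j) := by
  have hjk : (j : ℕ) < k := j.isLt
  set a : ℕ := ns ((j : ℕ) + 1) - ns (j : ℕ) with hadef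
  set b : ℕ := ns ((j : ℕ) + 2) - ns ((j : ℕ) + 1) with hbdef
  have ha : 0 < a := Nat.sub_pos_of_lt (hmono (j : ℕ) (by omega))
  have hb : 0 < b := Nat.sub_pos_of_lt (hmono ((j : ℕ) + 1) (by omega))
  have hc : ns ((j : ℕ) + 2) - ns (j : ℕ) = a + b := by
    have h1 := hmono (j : ℕ) (by omega)
    have h2 := hmono ((j : ℕ) + 1) (by omega)
    omega
  have hD0 := DExt_pos hΔ (k := k) (j : ℕ)
  have hD1 := DExt_pos hΔ (k := k) ((j : ℕ) + 1)
  have hD2 := DExt_pos hΔ (k := k) ((j : ℕ) + 2)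
  have hR : 0 < DExt k Δ (j : ℕ) ^ b * DExt k Δ ((j : ℕ) + 2) ^ a /
      DExt k Δ ((j : ℕ) + 1) ^ (a + b) := by positivity
  have haR : (0:ℝ) < (a : ℝ) := by exact_mod_cast ha
  have hbR : (0:ℝ) < (b : ℝ) := by exact_mod_cast hb
  show (DExt k Δ (j : ℕ) ^ b * DExt k Δ ((j : ℕ) + 2) ^ a /
      DExt k Δ ((j : ℕ) + 1) ^ (ns ((j : ℕ) + 2) - ns (j : ℕ))) ^ ((1:ℝ) / ((a * b : ℕ) : ℝ)) = _
  rw [hc, Real.rpow_def_of_pos hR]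
  congr 1
  rw [Real.log_div (by positivity) (by positivity),
    Real.log_mul (by positivity) (by positivity),
    Real.log_pow, Real.log_pow, Real.log_pow]
  rw [log_DExt, log_DExt, log_DExt]
  unfold Lm
  rw [show Ans ns (j : ℕ) = (a : ℝ) from rfl, show Ans ns ((j : ℕ) + 1) = (b : ℝ) from rfl]
  push_cast
  field_simp
  ring

end lems

noncomputable def Gi (k n : ℕ) (ns : ℕ → ℕ) (q : Fin k → ℝ) : Fin k → ℝ :=
  fun j => Real.exp (Xm k n ns (fun m => Real.log (q m)) ((j : ℕ) + 1))

section lems2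
variable {k n : ℕ} {ns : ℕ → ℕ}

lemma Gi_minorsToQ (h0 : ns 0 = 0) (htop : ns (k + 1) = n)
    (hmono : ∀ j, j ≤ k → ns j < ns (j + 1))
    {Δ : Fin k → ℝ} (hΔ : ∀ j, 0 < Δ j) :
    Gi k n ns (minorsToQ k ns Δ) = Δ := by
  funext j
  unfold Gi
  have hfun : (fun m => Real.log (minorsToQ k ns Δ m))
      = Lm k ns (fun i => Real.log (Δ i)) := by
    funext m
    rw [minorsToQ_eq_exp hmono hΔ m, Real.log_exp]
  rw [hfun, Xm_Lm h0 htop hmono _ (show (j : ℕ) + 1 ≤ k + 1 by omega)]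
  unfold xE
  rw [dif_pos ⟨by omega, by omega⟩, Real.exp_log (hΔ _)]
  congr 1

lemma minorsToQ_Gi (h0 : ns 0 = 0) (htop : ns (k + 1) = n)
    (hmono : ∀ j, j ≤ k → ns j < ns (j + 1))
    {q : Fin k → ℝ} (hq : ∀ j, 0 < q j) :
    minorsToQ k ns (Gi k n ns q) = q := by
  funext j
  have hGpos : ∀ i, 0 < Gi k n ns q i := fun i => Real.exp_pos _
  rw [minorsToQ_eq_exp hmono hGpos j]
  have hfun : (fun i => Real.log (Gi k n ns q i))
      = fun i : Fin k => Xm k n ns (fun m => Real.log (q m)) ((i : ℕ) + 1) :=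
    funext fun i => Real.log_exp _
  rw [hfun, Lm_Xm h0 htop hmono _ j, Real.exp_log (hq j)]

lemma cont_DExt (m : ℕ) : Continuous (fun Δ : Fin k → ℝ => DExt k Δ m) := by
  unfold DExt
  by_cases h : 1 ≤ m ∧ m ≤ k
  · simp only [dif_pos h]
    exact continuous_apply _
  · simp only [dif_neg h]
    exact continuous_const

lemma cont_minorsToQ : ContinuousOn (minorsToQ k ns) {Δ : Fin k → ℝ | ∀ j, 0 < Δ j} := by
  rw [continuousOn_pi]
  intro j
  simp only [minorsToQ]
  refine ContinuousOn.rpow_const ?_ ?_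
  · refine ContinuousOn.div
      (((cont_DExt _).pow _).mul ((cont_DExt _).pow _)).continuousOn
      ((cont_DExt _).pow _).continuousOn ?_
    intro Δ hΔ
    exact (pow_pos (DExt_pos hΔ _) _).ne'
  · intro Δ _
    right
    positivity

lemma cont_Gi : ContinuousOn (Gi k n ns) {q : Fin k → ℝ | ∀ j, 0 < q j} := by
  have hlog : ∀ m : Fin k,
      ContinuousOn (fun q : Fin k → ℝ => Real.log (q m)) {q : Fin k → ℝ | ∀ j, 0 < q j} :=
    fun m => ContinuousOn.log (continuous_apply m).continuousOn (fun q hq => (hq m).ne')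
  have hYs : ∀ t, ContinuousOn (fun q : Fin k → ℝ => Ys k (fun m => Real.log (q m)) t)
      {q : Fin k → ℝ | ∀ j, 0 < q j} := by
    intro t
    unfold Ys
    apply continuousOn_finset_sum
    intro m _
    by_cases h : m < k
    · simp only [dif_pos h]
      exact hlog ⟨m, h⟩
    · simp only [dif_neg h]
      exact continuousOn_const
  have hs1 : ContinuousOn (fun q : Fin k → ℝ => s1v k n ns (fun m => Real.log (q m)))
      {q : Fin k → ℝ | ∀ j, 0 < q j} := by
    unfold s1v
    exact ContinuousOn.mul continuousOn_const
      (continuousOn_finset_sum _ (fun i _ => continuousOn_const.mul (hYs i)))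
  have hXm : ∀ t, ContinuousOn (fun q : Fin k → ℝ => Xm k n ns (fun m => Real.log (q m)) t)
      {q : Fin k → ℝ | ∀ j, 0 < q j} := by
    intro t
    unfold Xm
    exact continuousOn_finset_sum _ (fun i _ => continuousOn_const.mul (hs1.add (hYs i)))
  rw [continuousOn_pi]
  intro j
  exact Real.continuous_exp.comp_continuousOn (hXm _)

end lems2

/-- The assignment `(Δ_{n_1},...,Δ_{n_k}) ↦ (q_1,...,q_k)` determined by
`q_j^{(n_j−n_{j−1})(n_{j+1}−n_j)} = Δ_{n_{j−1}}^{n_{j+1}−n_j} Δ_{n_{j+1}}^{n_j−n_{j−1}}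
/ Δ_{n_j}^{n_{j+1}−n_{j−1}}` is a well-defined continuous bijection of the positive
orthant `ℝ^k_{>0}` onto itself with continuous inverse. -/
theorem minorsToQ_homeomorph (k n : ℕ) (ns : ℕ → ℕ)
    (h0 : ns 0 = 0) (htop : ns (k + 1) = n)
    (hmono : ∀ j, j ≤ k → ns j < ns (j + 1)) :
    (∀ Δ : Fin k → ℝ, (∀ j, 0 < Δ j) → ∀ j : Fin k,
      0 < minorsToQ k ns Δ j ∧
      minorsToQ k ns Δ j ^ ((ns ((j : ℕ) + 1) - ns (j : ℕ)) * (ns ((j : ℕ) + 2) - ns ((j : ℕ) + 1)))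
        = DExt k Δ (j : ℕ) ^ (ns ((j : ℕ) + 2) - ns ((j : ℕ) + 1)) *
            DExt k Δ ((j : ℕ) + 2) ^ (ns ((j : ℕ) + 1) - ns (j : ℕ)) /
            DExt k Δ ((j : ℕ) + 1) ^ (ns ((j : ℕ) + 2) - ns (j : ℕ))) ∧
    Set.BijOn (minorsToQ k ns) {Δ | ∀ j, 0 < Δ j} {q | ∀ j, 0 < q j} ∧
    ContinuousOn (minorsToQ k ns) {Δ | ∀ j, 0 < Δ j} ∧
    ∃ G : (Fin k → ℝ) → (Fin k → ℝ),
      Set.MapsTo G {q | ∀ j, 0 < q j} {Δ | ∀ j, 0 < Δ j} ∧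
      ContinuousOn G {q | ∀ j, 0 < q j} ∧
      (∀ Δ : Fin k → ℝ, (∀ j, 0 < Δ j) → G (minorsToQ k ns Δ) = Δ) ∧
      (∀ q : Fin k → ℝ, (∀ j, 0 < q j) → minorsToQ k ns (G q) = q) := by
  have hGmaps : Set.MapsTo (Gi k n ns) {q : Fin k → ℝ | ∀ j, 0 < q j}
      {Δ : Fin k → ℝ | ∀ j, 0 < Δ j} := fun q _ j => Real.exp_pos _
  have hfmaps : Set.MapsTo (minorsToQ k ns) {Δ : Fin k → ℝ | ∀ j, 0 < Δ j}
      {q : Fin k → ℝ | ∀ j, 0 < q j} := by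
    intro Δ hΔ j
    rw [minorsToQ_eq_exp hmono hΔ j]
    exact Real.exp_pos _
  refine ⟨?_, ?_, cont_minorsToQ, Gi k n ns, hGmaps, cont_Gi,
    fun Δ hΔ => Gi_minorsToQ h0 htop hmono hΔ,
    fun q hq => minorsToQ_Gi h0 htop hmono hq⟩
  · intro Δ hΔ j
    have hjk : (j : ℕ) < k := j.isLt
    have hD0 := DExt_pos hΔ (k := k) (j : ℕ)
    have hD1 := DExt_pos hΔ (k := k) ((j : ℕ) + 1)
    have hD2 := DExt_pos hΔ (k := k) ((j : ℕ) + 2)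
    have hR : 0 < DExt k Δ (j : ℕ) ^ (ns ((j : ℕ) + 2) - ns ((j : ℕ) + 1)) *
        DExt k Δ ((j : ℕ) + 2) ^ (ns ((j : ℕ) + 1) - ns (j : ℕ)) /
        DExt k Δ ((j : ℕ) + 1) ^ (ns ((j : ℕ) + 2) - ns (j : ℕ)) := by positivity
    have ha : 0 < ns ((j : ℕ) + 1) - ns (j : ℕ) := Nat.sub_pos_of_lt (hmono _ (by omega))
    have hb : 0 < ns ((j : ℕ) + 2) - ns ((j : ℕ) + 1) :=
      Nat.sub_pos_of_lt (hmono _ (by omega))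
    have hN : (((ns ((j : ℕ) + 1) - ns (j : ℕ)) * (ns ((j : ℕ) + 2) - ns ((j : ℕ) + 1)) : ℕ) : ℝ)
        ≠ 0 := by
      have := Nat.mul_pos ha hb
      exact_mod_cast this.ne'
    refine ⟨Real.rpow_pos_of_pos hR _, ?_⟩
    simp only [minorsToQ]
    rw [← Real.rpow_natCast _ ((ns ((j : ℕ) + 1) - ns (j : ℕ)) *
        (ns ((j : ℕ) + 2) - ns ((j : ℕ) + 1))),
      ← Real.rpow_mul hR.le, one_div_mul_cancel hN, Real.rpow_one]
  · have hinv : Set.InvOn (Gi k n ns) (minorsToQ k ns)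
        {Δ : Fin k → ℝ | ∀ j, 0 < Δ j} {q : Fin k → ℝ | ∀ j, 0 < q j} :=
      ⟨fun Δ hΔ => Gi_minorsToQ h0 htop hmono hΔ, fun q hq => minorsToQ_Gi h0 htop hmono hq⟩
    exact hinv.bijOn hfmaps hGmaps
end
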